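/- The Kleisli category of the filter monad on the category of sets (types) is equivalent to the opposite of the category whose objects are complete atomic Boolean algebras and whose morphisms are maps preserving finite infima (the top element and binary infima). -/

import Mathlib

open CategoryTheory

universe u

attribute [local instance] Filter.monad Filter.lawfulMonad

/-- A bundled complete atomic Boolean algebra. -/
structure CABACat : Type (u + 1) where
  carrier : Type u
  [str : CompleteAtomicBooleanAlgebra carrier]

attribute [instance] CABACat.str

instance : CoeSort CABACat.{u} (Type u) := ⟨CABACat.carrier⟩

/-- The category of complete atomic Boolean algebras with morphisms the maps preserving
finite infima (the top element and binary infima). -/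
instance : Category CABACat.{u} where
  Hom A B := InfTopHom A B
  id A := InfTopHom.id A
  comp f g := g.comp f
  id_comp f := InfTopHom.ext fun x => rfl
  comp_id f := InfTopHom.ext fun x => rfl
  assoc f g h := InfTopHom.ext fun x => rfl

section Aux

/-- Atoms of a CABA. -/
abbrev CABAAtoms (A : Type u) [CompleteAtomicBooleanAlgebra A] : Type u := {a : A // IsAtom a}

/-- Every CABA is order-isomorphic to the powerset of its atoms. -/
noncomputable def cabaOrderIso (A : Type u) [CompleteAtomicBooleanAlgebra A] :
    A ≃o Set (CABAAtoms A) where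
  toFun x := {a | (a.1 : A) ≤ x}
  invFun S := sSup (Subtype.val '' S)
  left_inv x := by
    show sSup (Subtype.val '' {a : CABAAtoms A | (a.1 : A) ≤ x}) = x
    have h : (Subtype.val '' {a : CABAAtoms A | (a.1 : A) ≤ x}) =
        {a : A | IsAtom a ∧ a ≤ x} := by
      ext b
      constructor
      · rintro ⟨⟨b, hb⟩, hle, rfl⟩; exact ⟨hb, hle⟩
      · rintro ⟨hb, hle⟩; exact ⟨⟨b, hb⟩, hle, rfl⟩
    rw [h, sSup_atoms_le_eq]
  right_inv S := by
    ext a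
    simp only [Set.mem_setOf_eq]
    constructor
    · intro h
      rw [sSup_eq_iSup'] at h
      obtain ⟨⟨b, hb⟩, hab⟩ := (IsAtom.le_iSup a.2).1 h
      obtain ⟨c, hcS, rfl⟩ := hb
      rcases (c.2.le_iff).1 hab with h' | h'
      · exact absurd h' a.2.1
      · have hac : a = c := Subtype.ext h'
        exact hac ▸ hcS
    · intro h
      exact le_sSup ⟨a, h, rfl⟩
  map_rel_iff' := by
    intro x y
    constructor
    · intro h
      exact le_iff_atom_le_imp.2 fun c hc hcx => h (show (⟨c, hc⟩ : CABAAtoms A).1 ≤ x from hcx)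
    · intro h a ha
      exact le_trans ha h

/-- A Kleisli morphism for the filter monad induces a finite-infima-preserving map
backwards on powersets. -/
def kleisliToInfTop {X Y : Type u} (f : X → Filter Y) : InfTopHom (Set Y) (Set X) where
  toFun B := {x | B ∈ f x}
  map_inf' B C := by
    ext x
    simp only [Set.inf_eq_inter, Set.mem_inter_iff, Set.mem_setOf_eq, Filter.inter_mem_iff]
  map_top' := by
    ext x
    simp only [Set.top_eq_univ, Set.mem_setOf_eq, Filter.univ_mem, Set.mem_univ]

/-- The functor from the Kleisli category of the filter monad to `CABACatᵒᵖ`. -/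
def filterKleisliFunctor : KleisliCat Filter.{u} ⥤ CABACat.{u}ᵒᵖ where
  obj (X : Type u) := Opposite.op ⟨Set X⟩
  map {X Y : Type u} f := (show (⟨Set Y⟩ : CABACat.{u}) ⟶ ⟨Set X⟩ from kleisliToInfTop f).op
  map_id (X : Type u) := by
    apply Quiver.Hom.unop_inj
    apply InfTopHom.ext
    intro B
    ext x
    exact Filter.mem_pure
  map_comp {X Y Z : Type u} f g := by
    apply Quiver.Hom.unop_inj
    apply InfTopHom.ext
    intro B
    ext x
    exact Filter.mem_bind'

theorem filterKleisliFunctor_faithful : filterKleisliFunctor.{u}.Faithful := by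
  constructor
  intro (X : Type u) (Y : Type u) f g h
  funext x
  apply Filter.ext
  intro B
  have := congrArg (fun φ => x ∈ (φ.unop : InfTopHom (Set Y) (Set X)) B) h
  simpa [filterKleisliFunctor, kleisliToInfTop] using this

theorem filterKleisliFunctor_full : filterKleisliFunctor.{u}.Full := by
  constructor
  intro (X : Type u) (Y : Type u) φ
  let ψ : InfTopHom (Set Y) (Set X) := φ.unop
  refine ⟨fun x => ⟨{B | x ∈ ψ B}, ?_, ?_, ?_⟩, ?_⟩
  · show x ∈ ψ Set.univ
    have h : (Set.univ : Set Y) = ⊤ := rfl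
    rw [h, map_top]
    trivial
  · intro B C hB hBC
    show x ∈ ψ C
    have hBC' : B ⊓ C = B := inf_eq_left.2 hBC
    have hm : ψ B ≤ ψ C := by
      rw [← hBC', map_inf]; exact inf_le_right
    exact hm hB
  · intro B C hB hC
    show x ∈ ψ (B ⊓ C)
    rw [map_inf]
    exact ⟨hB, hC⟩
  · apply Quiver.Hom.unop_inj
    apply InfTopHom.ext
    intro B
    rfl

theorem filterKleisliFunctor_essSurj : filterKleisliFunctor.{u}.EssSurj := by
  constructor
  intro A
  refine ⟨CABAAtoms A.unop, ⟨?_⟩⟩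
  let e := cabaOrderIso A.unop
  refine Iso.op (X := A.unop) (Y := ⟨Set (CABAAtoms A.unop)⟩) ?_
  exact
    { hom := (⟨⟨e, fun a b => e.map_inf a b⟩, e.map_top⟩ : InfTopHom A.unop (Set (CABAAtoms A.unop)))
      inv := (⟨⟨e.symm, fun a b => e.symm.map_inf a b⟩, e.symm.map_top⟩ :
        InfTopHom (Set (CABAAtoms A.unop)) A.unop)
      hom_inv_id := InfTopHom.ext fun x => e.symm_apply_apply x
      inv_hom_id := InfTopHom.ext fun S => e.apply_symm_apply S }

end Aux

/-- The Kleisli category of the filter monad on the category of sets is equivalent to the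
opposite of the category of complete atomic Boolean algebras and finite-infima-preserving
maps. -/
theorem kleisliFilter_equiv_CABAInfTopOp :
    Nonempty (KleisliCat Filter.{u} ≌ CABACat.{u}ᵒᵖ) := by
  haveI := filterKleisliFunctor_faithful.{u}
  haveI := filterKleisliFunctor_full.{u}
  haveI := filterKleisliFunctor_essSurj.{u}
  haveI : filterKleisliFunctor.{u}.IsEquivalence := ⟨‹_›, ‹_›, ‹_›⟩
  exact ⟨filterKleisliFunctor.asEquivalence⟩
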